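/- arXiv:2410.06081 — 3 statements merged into one kernel-verified Lean document; each statement's English description precedes it below -/
import Mathlib

section
/- Let r > 1 and q > 1 be real numbers, and let f : [0,∞) → [0,∞) be a continuous function such that f(0) = 0 is the minimum of f on [0,∞), lim_{t→0⁺} f(t)/t^{r−1} = 0, and limsup_{t→∞} f(t)/t^{q−1} < ∞. For λ > 0 define f_λ : ℝ → ℝ by f_λ(t) = f(t) − λ for t > 0, f_λ(t) = −λ(t+1) for −1 ≤ t ≤ 0, and f_λ(t) = 0 for t < −1, and set F_λ(t) = ∫₀ᵗ f_λ(s) ds. Then there exists a constant c₁ > 0 such that for every λ > 0 and every t ∈ ℝ, F_λ(t) ≤ (1/r)·max(t,0)^r + (c₁/q)·max(t,0)^q + λ/2. -/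
open Set Filter intervalIntegral

/-- The truncated nonlinearity `f_λ`. -/
noncomputable def fTrunc (f : ℝ → ℝ) (lam : ℝ) (t : ℝ) : ℝ :=
  if 0 < t then f t - lam else if -1 ≤ t then -lam * (t + 1) else 0

/-- The primitive `F_λ(t) = ∫₀ᵗ f_λ(s) ds`. -/
noncomputable def FTrunc (f : ℝ → ℝ) (lam : ℝ) (t : ℝ) : ℝ :=
  ∫ s in (0 : ℝ)..t, fTrunc f lam s

/-- There is `c₁ > 0` such that for all `λ > 0` and `t ∈ ℝ`,
`F_λ(t) ≤ (1/r)·(t⁺)^r + (c₁/q)·(t⁺)^q + λ/2`. -/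
theorem FTrunc_upper_bound (r q : ℝ) (hr : 1 < r) (hq : 1 < q) (f : ℝ → ℝ)
    (hf_cont : ContinuousOn f (Ici 0))
    (hf_nonneg : ∀ t ∈ Ici (0 : ℝ), 0 ≤ f t)
    (hf0 : f 0 = 0)
    (hf2 : Tendsto (fun t => f t / t ^ (r - 1)) (nhdsWithin 0 (Ioi 0)) (nhds 0))
    (hf3 : ∃ C : ℝ, ∀ᶠ t in atTop, f t / t ^ (q - 1) ≤ C) :
    ∃ c₁ > (0 : ℝ), ∀ lam > (0 : ℝ), ∀ t : ℝ,
      FTrunc f lam t ≤ (1 / r) * max t 0 ^ r + (c₁ / q) * max t 0 ^ q + lam / 2 := by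
  -- extract δ from hf2
  have h1 : ∀ᶠ s in nhdsWithin 0 (Ioi 0), f s / s ^ (r - 1) < 1 :=
    hf2.eventually_lt_const one_pos
  rw [eventually_iff, mem_nhdsGT_iff_exists_Ioo_subset] at h1
  obtain ⟨δ, hδ, hδ1⟩ := h1
  have hδ0 : (0 : ℝ) < δ := hδ
  have hsmall : ∀ s, 0 < s → s < δ → f s ≤ s ^ (r - 1) := by
    intro s hs hsδ
    have h := hδ1 ⟨hs, hsδ⟩
    simp only [mem_setOf_eq] at h
    have hp : (0 : ℝ) < s ^ (r - 1) := Real.rpow_pos_of_pos hs _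
    rw [div_lt_one hp] at h
    exact h.le
  -- extract C, T from hf3
  obtain ⟨C, hC⟩ := hf3
  rw [eventually_atTop] at hC
  obtain ⟨T₀, hT₀⟩ := hC
  set T : ℝ := max T₀ 1 with hT
  have hT1 : (1 : ℝ) ≤ T := le_max_right _ _
  have hTpos : (0 : ℝ) < T := lt_of_lt_of_le one_pos hT1
  have hbig : ∀ s, T ≤ s → f s ≤ C * s ^ (q - 1) := by
    intro s hs
    have hs0 : 0 < s := lt_of_lt_of_le hTpos hs
    have := hT₀ s (le_trans (le_max_left _ _) hs)
    have hp : (0 : ℝ) < s ^ (q - 1) := Real.rpow_pos_of_pos hs0 _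
    rw [div_le_iff₀ hp] at this
    exact this
  -- bound on [0, T]
  obtain ⟨M, hM⟩ := (isCompact_Icc (a := (0:ℝ)) (b := T)).exists_bound_of_continuousOn
    (hf_cont.mono (fun x hx => hx.1))
  have hM0 : 0 ≤ M := le_trans (norm_nonneg _) (hM 0 ⟨le_refl _, hTpos.le⟩)
  have hmid : ∀ s ∈ Icc (0:ℝ) T, f s ≤ M := fun s hs =>
    le_trans (le_abs_self _) (hM s hs)
  have hδq : (0 : ℝ) < δ ^ (q - 1) := Real.rpow_pos_of_pos hδ0 _
  obtain ⟨c₁, hc₁⟩ : ∃ x : ℝ, x = max C 0 + M / δ ^ (q - 1) + 1 := ⟨_, rfl⟩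
  have hdivnn : 0 ≤ M / δ ^ (q - 1) := div_nonneg hM0 hδq.le
  have hc₁pos : 0 < c₁ := by
    have : (0:ℝ) ≤ max C 0 := le_max_right _ _
    rw [hc₁]; linarith
  have hCc : C ≤ c₁ := by
    have : C ≤ max C 0 := le_max_left _ _
    rw [hc₁]; linarith
  have hMc : M / δ ^ (q - 1) ≤ c₁ := by
    have : (0:ℝ) ≤ max C 0 := le_max_right _ _
    rw [hc₁]; linarith
  refine ⟨c₁, hc₁pos, fun lam hlam t => ?_⟩
  have hr1 : (0:ℝ) < r - 1 := by linarith
  have hq1 : (0:ℝ) < q - 1 := by linarith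
  have hr0 : r ≠ 0 := by linarith
  have hq0 : q ≠ 0 := by linarith
  -- the key pointwise bound
  have key : ∀ s, 0 ≤ s → f s ≤ s ^ (r - 1) + c₁ * s ^ (q - 1) := by
    intro s hs
    rcases eq_or_lt_of_le hs with h0 | hs0
    · rw [← h0, Real.zero_rpow (ne_of_gt hr1), Real.zero_rpow (ne_of_gt hq1), hf0]
      norm_num
    by_cases h1 : s < δ
    · have := hsmall s hs0 h1
      have h2 : 0 ≤ c₁ * s ^ (q - 1) :=
        mul_nonneg hc₁pos.le (Real.rpow_nonneg hs _)
      linarith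
    push_neg at h1
    by_cases h2 : s ≤ T
    · have hfs := hmid s ⟨hs, h2⟩
      have hds : δ ^ (q - 1) ≤ s ^ (q - 1) := Real.rpow_le_rpow hδ0.le h1 hq1.le
      have hsq : 0 ≤ s ^ (q - 1) := Real.rpow_nonneg hs _
      have hMδ : M = (M / δ ^ (q - 1)) * δ ^ (q - 1) := by
        field_simp
      have h3 : (M / δ ^ (q - 1)) * δ ^ (q - 1) ≤ c₁ * s ^ (q - 1) := by
        apply mul_le_mul hMc hds hδq.le (le_trans (div_nonneg hM0 hδq.le) hMc)
      have h4 : 0 ≤ s ^ (r - 1) := Real.rpow_nonneg hs _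
      have h5 : M ≤ c₁ * s ^ (q - 1) := le_trans (le_of_eq hMδ) h3
      linarith
    · push_neg at h2
      have hfs := hbig s h2.le
      have hsq : 0 ≤ s ^ (q - 1) := Real.rpow_nonneg hs _
      have h3 : C * s ^ (q - 1) ≤ c₁ * s ^ (q - 1) := mul_le_mul_of_nonneg_right hCc hsq
      have h4 : 0 ≤ s ^ (r - 1) := Real.rpow_nonneg hs _
      linarith
  -- now case on t
  rcases le_or_gt t 0 with ht | ht
  · -- t ≤ 0 : show FTrunc ≤ lam/2
    have hmax : max t 0 = 0 := max_eq_right ht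
    rw [hmax, Real.zero_rpow hr0, Real.zero_rpow hq0]
    have hbound : FTrunc f lam t ≤ lam / 2 := by
      rcases le_or_gt (-1 : ℝ) t with ht1 | ht1
      · -- -1 ≤ t ≤ 0
        have heq : FTrunc f lam t = ∫ s in (0:ℝ)..t, (-lam * (s + 1)) := by
          apply integral_congr
          intro s hs
          rw [uIcc_of_ge ht] at hs
          have hs1 : -1 ≤ s := le_trans ht1 hs.1
          have hs2 : ¬ (0 < s) := not_lt.mpr hs.2
          simp [fTrunc, hs2, hs1]
        rw [heq]
        have : ∫ s in (0:ℝ)..t, (-lam * (s + 1)) = -lam * ((t^2 - 0^2)/2 + (t - 0) * 1) := by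
          rw [integral_const_mul]
          congr 1
          rw [integral_add intervalIntegrable_id (intervalIntegrable_const),
            integral_id, integral_const]
          simp [smul_eq_mul]
        rw [this]
        nlinarith [sq_nonneg (t + 1)]
      · -- t < -1
        set h : ℝ → ℝ := fun s => -lam * (max s (-1) + 1) with hh
        have hcont : Continuous h := by
          apply continuous_const.mul
          exact (continuous_id.max continuous_const).add continuous_const
        have heq : FTrunc f lam t = ∫ s in (0:ℝ)..t, h s := by
          apply integral_congr
          intro s hs
          rw [uIcc_of_ge ht] at hs
          have hs2 : ¬ (0 < s) := not_lt.mpr hs.2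
          rcases le_or_gt (-1 : ℝ) s with hs1 | hs1
          · simp [fTrunc, hh, hs2, hs1, max_eq_left hs1]
          · simp [fTrunc, hh, hs2, not_le.mpr hs1, max_eq_right hs1.le]
        rw [heq]
        have hsplit : ∫ s in (0:ℝ)..t, h s
            = (∫ s in (0:ℝ)..(-1:ℝ), h s) + ∫ s in (-1:ℝ)..t, h s :=
          (integral_add_adjacent_intervals (hcont.intervalIntegrable _ _)
            (hcont.intervalIntegrable _ _)).symm
        have hzero : ∫ s in (-1:ℝ)..t, h s = 0 := by
          have : ∫ s in (-1:ℝ)..t, h s = ∫ s in (-1:ℝ)..t, (0:ℝ) := by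
            apply integral_congr
            intro s hs
            rw [uIcc_of_ge ht1.le] at hs
            have : max s (-1) = -1 := max_eq_right hs.2
            simp [hh, this]
          rw [this, integral_const, smul_zero]
        have hone : ∫ s in (0:ℝ)..(-1:ℝ), h s = lam / 2 := by
          have heq2 : ∫ s in (0:ℝ)..(-1:ℝ), h s = ∫ s in (0:ℝ)..(-1:ℝ), (-lam * (s + 1)) := by
            apply integral_congr
            intro s hs
            rw [uIcc_of_ge (by norm_num : (-1:ℝ) ≤ 0)] at hs
            simp [hh, max_eq_left hs.1]
          rw [heq2, integral_const_mul,
            integral_add intervalIntegrable_id (intervalIntegrable_const),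
            integral_id, integral_const]
          simp [smul_eq_mul]
          ring
        rw [hsplit, hzero, hone, add_zero]
    linarith [hbound]
  · -- t > 0
    have hmax : max t 0 = t := max_eq_left ht.le
    rw [hmax]
    have hIcc : uIcc (0:ℝ) t = Icc 0 t := uIcc_of_le ht.le
    have hfint : IntervalIntegrable f MeasureTheory.volume 0 t := by
      apply ContinuousOn.intervalIntegrable
      rw [hIcc]
      exact hf_cont.mono (fun x hx => hx.1)
    have heq : FTrunc f lam t = (∫ s in (0:ℝ)..t, f s) - lam * t := by
      have h1 : FTrunc f lam t = ∫ s in (0:ℝ)..t, (f s - lam) := by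
        apply integral_congr
        intro s hs
        rw [hIcc] at hs
        rcases eq_or_lt_of_le hs.1 with h0 | h0
        · simp [fTrunc, ← h0, hf0]
        · simp [fTrunc, h0]
      rw [h1, integral_sub hfint intervalIntegrable_const, integral_const]
      simp [smul_eq_mul, mul_comm]
    rw [heq]
    have hrint : IntervalIntegrable (fun s : ℝ => s ^ (r - 1)) MeasureTheory.volume 0 t :=
      intervalIntegrable_rpow (Or.inl hr1.le)
    have hqint : IntervalIntegrable (fun s : ℝ => c₁ * s ^ (q - 1)) MeasureTheory.volume 0 t :=
      (intervalIntegrable_rpow (Or.inl hq1.le)).const_mul _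
    have hmono : (∫ s in (0:ℝ)..t, f s)
        ≤ ∫ s in (0:ℝ)..t, (s ^ (r - 1) + c₁ * s ^ (q - 1)) := by
      apply integral_mono_on ht.le hfint (hrint.add hqint)
      intro s hs
      exact key s hs.1
    have hcomp : ∫ s in (0:ℝ)..t, (s ^ (r - 1) + c₁ * s ^ (q - 1))
        = t ^ r / r + c₁ * (t ^ q / q) := by
      rw [integral_add hrint hqint, integral_const_mul,
        integral_rpow (Or.inl (by linarith : (-1:ℝ) < r - 1)),
        integral_rpow (Or.inl (by linarith : (-1:ℝ) < q - 1))]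
      rw [Real.zero_rpow (by linarith : r - 1 + 1 ≠ 0),
        Real.zero_rpow (by linarith : q - 1 + 1 ≠ 0)]
      ring_nf
    rw [hcomp] at hmono
    have hlt : 0 ≤ lam * t := mul_nonneg hlam.le ht.le
    have hl2 : 0 ≤ lam / 2 := by linarith
    calc (∫ s in (0:ℝ)..t, f s) - lam * t ≤ t ^ r / r + c₁ * (t ^ q / q) := by linarith
      _ ≤ (1 / r) * t ^ r + (c₁ / q) * t ^ q + lam / 2 := by
          have e1 : t ^ r / r = (1 / r) * t ^ r := by ring
          have e2 : c₁ * (t ^ q / q) = (c₁ / q) * t ^ q := by ring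
          linarith
end

section
/- Let f : [0,∞) → [0,∞) be continuous with f(0) = 0 the minimum of f, let θ > 1 and t₀ > 0 satisfy the Ambrosetti–Rabinowitz type condition θ F(t) ≤ f(t) t for all t ≥ t₀, where F(t) = ∫₀ᵗ f(s) ds, and let λ₁ > 0. For λ > 0 define f_λ : ℝ → ℝ by f_λ(t) = f(t) − λ for t > 0, f_λ(t) = −λ(t+1) for −1 ≤ t ≤ 0, and f_λ(t) = 0 for t < −1, and set F_λ(t) = ∫₀ᵗ f_λ(s) ds. Then there exists a constant M > 0, independent of λ, such that for every λ ∈ (0, λ₁) and every t ∈ ℝ, θ F_λ(t) ≤ f_λ(t) t + M. -/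
open Set Filter

/-- The primitive `F(t) = ∫₀ᵗ f(s) ds`. -/
noncomputable def FPrim (f : ℝ → ℝ) (t : ℝ) : ℝ :=
  ∫ s in (0 : ℝ)..t, f s

lemma fTrunc_eq_of_nonneg (f : ℝ → ℝ) (hf0 : f 0 = 0) (lam : ℝ) {s : ℝ} (hs : 0 ≤ s) :
    fTrunc f lam s = f s - lam := by
  rcases lt_or_eq_of_le hs with h | h
  · simp [fTrunc, h]
  · simp [fTrunc, ← h, hf0]

lemma FTrunc_of_nonneg (f : ℝ → ℝ) (hf0 : f 0 = 0) (lam : ℝ) {t : ℝ} (ht : 0 ≤ t)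
    (hint : IntervalIntegrable f MeasureTheory.volume 0 t) :
    FTrunc f lam t = FPrim f t - lam * t := by
  have heq : EqOn (fTrunc f lam) (fun s => f s - lam) (uIcc 0 t) := by
    intro s hs
    rw [uIcc_of_le ht] at hs
    exact fTrunc_eq_of_nonneg f hf0 lam hs.1
  rw [FTrunc, intervalIntegral.integral_congr heq,
    intervalIntegral.integral_sub hint intervalIntegrable_const,
    intervalIntegral.integral_const]
  simp [FPrim]
  ring

lemma FTrunc_of_mem (f : ℝ → ℝ) (lam : ℝ) {t : ℝ} (ht1 : -1 ≤ t) (ht2 : t ≤ 0) :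
    FTrunc f lam t = -lam * (t ^ 2 / 2 + t) := by
  have heq : EqOn (fTrunc f lam) (fun s => -lam * (s + 1)) (uIcc 0 t) := by
    intro s hs
    rw [uIcc_of_ge ht2] at hs
    have hs0 : ¬ (0 < s) := not_lt.mpr hs.2
    have hs1 : -1 ≤ s := le_trans ht1 hs.1
    simp [fTrunc, hs0, hs1]
  rw [FTrunc, intervalIntegral.integral_congr heq, intervalIntegral.integral_const_mul]
  have h1 : (∫ s in (0 : ℝ)..t, (s + 1)) = t ^ 2 / 2 + t := by
    have hid : IntervalIntegrable (fun x : ℝ => x) MeasureTheory.volume 0 t :=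
      (continuous_id.intervalIntegrable 0 t : _)
    rw [intervalIntegral.integral_add hid intervalIntegrable_const, integral_id,
      intervalIntegral.integral_const]
    simp
  rw [h1]

lemma FTrunc_of_le_neg_one (f : ℝ → ℝ) (lam : ℝ) {t : ℝ} (ht : t ≤ -1) :
    FTrunc f lam t = lam / 2 := by
  have heq1 : EqOn (fTrunc f lam) (fun s => -lam * (s + 1)) (uIcc 0 (-1)) := by
    intro s hs
    rw [show uIcc (0 : ℝ) (-1) = Icc (-1) 0 by rw [uIcc_of_ge]; norm_num] at hs
    have hs0 : ¬ (0 < s) := not_lt.mpr hs.2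
    simp [fTrunc, hs0, hs.1]
  have heq2 : EqOn (fTrunc f lam) (fun _ => (0 : ℝ)) (uIcc (-1) t) := by
    intro s hs
    rw [uIcc_of_ge ht] at hs
    have hs1 : s ≤ -1 := hs.2
    have hs0 : ¬ (0 < s) := by linarith
    rcases lt_or_eq_of_le hs1 with h | h
    · simp [fTrunc, hs0, not_le.mpr h]
    · simp [fTrunc, hs0, h]
  have hint1 : IntervalIntegrable (fTrunc f lam) MeasureTheory.volume 0 (-1) := by
    apply ContinuousOn.intervalIntegrable
    exact ContinuousOn.congr (by fun_prop) heq1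
  have hint2 : IntervalIntegrable (fTrunc f lam) MeasureTheory.volume (-1) t := by
    apply ContinuousOn.intervalIntegrable
    exact ContinuousOn.congr continuousOn_const heq2
  have hadd := intervalIntegral.integral_add_adjacent_intervals hint1 hint2
  have h1 : (∫ s in (0 : ℝ)..(-1), fTrunc f lam s) = lam / 2 := by
    have := FTrunc_of_mem f lam (t := -1) le_rfl (by norm_num)
    rw [FTrunc] at this
    rw [this]; ring
  have h2 : (∫ s in (-1 : ℝ)..t, fTrunc f lam s) = 0 := by
    rw [intervalIntegral.integral_congr heq2]
    simp
  rw [FTrunc, ← hadd, h1, h2, add_zero]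

/-- There exists `M > 0`, independent of `λ`, such that for all `λ ∈ (0, λ₁)`
and all `t ∈ ℝ`, `θ F_λ(t) ≤ f_λ(t) t + M`. -/
theorem AR_truncated (f : ℝ → ℝ)
    (hf_cont : ContinuousOn f (Ici 0))
    (hf_nonneg : ∀ t ∈ Ici (0 : ℝ), 0 ≤ f t)
    (hf0 : f 0 = 0)
    (θ t₀ : ℝ) (hθ : 1 < θ) (ht₀ : 0 < t₀)
    (hAR : ∀ t ≥ t₀, θ * FPrim f t ≤ f t * t)
    (lam₁ : ℝ) (hlam₁ : 0 < lam₁) :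
    ∃ M > (0 : ℝ), ∀ lam : ℝ, 0 < lam → lam < lam₁ → ∀ t : ℝ,
      θ * FTrunc f lam t ≤ fTrunc f lam t * t + M := by
  have hθ0 : (0 : ℝ) < θ := by linarith
  have hfi : ∀ b : ℝ, 0 ≤ b → IntervalIntegrable f MeasureTheory.volume 0 b := by
    intro b hb
    apply ContinuousOn.intervalIntegrable
    apply hf_cont.mono
    rw [uIcc_of_le hb]
    exact Icc_subset_Ici_self
  have hF0 : 0 ≤ FPrim f t₀ :=
    intervalIntegral.integral_nonneg ht₀.le (fun s hs => hf_nonneg s hs.1)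
  refine ⟨θ * FPrim f t₀ + lam₁ * t₀ + θ * lam₁ / 2 + 1, ?_, ?_⟩
  · nlinarith [mul_pos hlam₁ ht₀, mul_pos hθ0 hlam₁, mul_nonneg hθ0.le hF0]
  intro lam hlam hlamlt t
  rcases le_or_gt t (-1) with h1 | h1
  · rw [FTrunc_of_le_neg_one f lam h1]
    have hft : fTrunc f lam t = 0 := by
      rcases lt_or_eq_of_le h1 with h | h
      · simp [fTrunc, not_lt.mpr (by linarith : t ≤ 0), not_le.mpr h]
      · simp [fTrunc, not_lt.mpr (by linarith : t ≤ 0), h]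
    rw [hft]
    nlinarith [mul_pos hθ0 hlam, mul_pos hlam₁ ht₀, mul_nonneg hθ0.le hF0,
      mul_lt_mul_of_pos_left hlamlt hθ0]
  rcases le_or_gt t 0 with h2 | h2
  · rw [FTrunc_of_mem f lam h1.le h2]
    have hft : fTrunc f lam t = -lam * (t + 1) := by
      simp [fTrunc, not_lt.mpr h2, h1.le]
    rw [hft]
    nlinarith [mul_nonneg (mul_nonneg hlam.le (by linarith : (0:ℝ) ≤ t + 1))
        (neg_nonneg.mpr h2), mul_pos hθ0 hlam, mul_pos hlam₁ ht₀,
      mul_nonneg hθ0.le hF0, mul_lt_mul_of_pos_left hlamlt hθ0,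
      mul_nonneg (mul_nonneg hθ0.le hlam.le) (sq_nonneg (t + 1))]
  · rw [FTrunc_of_nonneg f hf0 lam h2.le (hfi t h2.le)]
    have hft : fTrunc f lam t = f t - lam := by simp [fTrunc, h2]
    rw [hft]
    rcases le_or_gt t₀ t with h3 | h3
    · have hAR' := hAR t h3
      nlinarith [mul_pos hlam h2, mul_nonneg (mul_nonneg (by linarith : (0:ℝ) ≤ θ - 1)
        hlam.le) h2.le, mul_pos hlam₁ ht₀, mul_nonneg hθ0.le hF0, mul_pos hθ0 hlam₁]
    · have hint2 : IntervalIntegrable f MeasureTheory.volume t t₀ := by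
        apply ContinuousOn.intervalIntegrable
        apply hf_cont.mono
        rw [uIcc_of_le h3.le]
        intro x hx
        exact le_trans h2.le hx.1
      have hadd := intervalIntegral.integral_add_adjacent_intervals (hfi t h2.le) hint2
      have hnn : 0 ≤ ∫ s in t..t₀, f s :=
        intervalIntegral.integral_nonneg h3.le (fun s hs => hf_nonneg s (le_trans h2.le hs.1))
      have hmono : FPrim f t ≤ FPrim f t₀ := by
        rw [FPrim, FPrim, ← hadd]; linarith
      nlinarith [mul_pos hlam h2, mul_lt_mul'' hlamlt h3 hlam.le h2.le,
        mul_le_mul_of_nonneg_left hmono hθ0.le, mul_nonneg (hf_nonneg t h2.le) h2.le,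
        mul_pos hθ0 hlam₁]
end

section
/- Let (Ω, μ) be a measure space and let p : Ω → ℝ be measurable with 1 < p⁻ := ess inf p and p⁺ := ess sup p < ∞, and let p'(x) be the conjugate exponent defined pointwise by 1/p(x) + 1/p'(x) = 1. For measurable functions define the Luxemburg norms ‖u‖_{p(·)} = inf{ λ > 0 : ∫_Ω (|u(x)|/λ)^{p(x)} dμ ≤ 1 } and similarly ‖·‖_{p'(·)}. Then there exists a constant c > 1, depending only on p⁻ and p⁺, such that whenever f has ‖f‖_{p(·)} < ∞ and g has ‖g‖_{p'(·)} < ∞, the product fg is integrable and ∫_Ω |f g| dμ ≤ c · ‖f‖_{p(·)} · ‖g‖_{p'(·)}. -/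
open Set Filter MeasureTheory ENNReal

/-- The modular `ρ(u) = ∫_Ω |u(x)|^{p(x)} dμ`. -/
noncomputable def vModular {Ω : Type*} [MeasurableSpace Ω] (μ : Measure Ω)
    (p : Ω → ℝ) (u : Ω → ℝ) : ℝ≥0∞ :=
  ∫⁻ x, ENNReal.ofReal (|u x| ^ p x) ∂μ

/-- The Luxemburg norm `‖u‖_{p(·)} = inf { λ > 0 : ρ(u/λ) ≤ 1 }` (equal to `∞`
when no such `λ` exists). -/
noncomputable def luxNorm {Ω : Type*} [MeasurableSpace Ω] (μ : Measure Ω)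
    (p : Ω → ℝ) (u : Ω → ℝ) : ℝ≥0∞ :=
  sInf {c : ℝ≥0∞ | c ≠ ∞ ∧ 0 < c ∧ vModular μ p (fun x => u x / c.toReal) ≤ 1}

/-!
Young's inequality `st ≤ s^p/p + t^q/q ≤ s^p + t^q`, applied pointwise with exponents
`p(x), p'(x)` and integrated, gives `∫ |fg| ≤ ρ_p(f) + ρ_{p'}(g)`. For admissible scales
`a, b` of the Luxemburg norms (`ρ_p(f/a) ≤ 1`, `ρ_{p'}(g/b) ≤ 1`) this reads
`∫ |fg| ≤ 2ab`, and taking the infimum over `a` and `b` gives the inequality with `c = 2`.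
-/

lemma Real.mul_le_rpow_add_rpow {s t p q : ℝ} (hs : 0 ≤ s) (ht : 0 ≤ t)
    (hpq : p.HolderConjugate q) : s * t ≤ s ^ p + t ^ q :=
  (Real.young_inequality_of_nonneg hs ht hpq).trans <| add_le_add
    (div_le_self (Real.rpow_nonneg hs p) hpq.lt.le)
    (div_le_self (Real.rpow_nonneg ht q) hpq.symm.lt.le)

lemma MeasureTheory.ae_lt_of_nonneg_of_lt_essInf {Ω : Type*} [MeasurableSpace Ω]
    {μ : Measure Ω} {f : Ω → ℝ} {a : ℝ} (ha : 0 ≤ a) (h : a < essInf f μ) :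
    ∀ᵐ x ∂μ, a < f x := by
  refine ae_lt_of_lt_essInf h ?_
  by_contra hf
  -- without an a.e. lower bound, `essInf f μ` takes the junk value `0`
  exact h.not_ge (by rwa [essInf, Real.liminf_of_not_isBoundedUnder hf])

section Modular

variable {Ω : Type*} [MeasurableSpace Ω] {μ : Measure Ω} {p q : Ω → ℝ}

lemma lintegral_abs_mul_le_vModular_add_vModular (hp : Measurable p)
    (hpq : ∀ᵐ x ∂μ, (p x).HolderConjugate (q x)) {f g : Ω → ℝ} (hf : Measurable f) :
    ∫⁻ x, ENNReal.ofReal |f x * g x| ∂μ ≤ vModular μ p f + vModular μ q g := by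
  calc ∫⁻ x, ENNReal.ofReal |f x * g x| ∂μ
      ≤ ∫⁻ x, (ENNReal.ofReal (|f x| ^ p x) + ENNReal.ofReal (|g x| ^ q x)) ∂μ := by
        refine lintegral_mono_ae ?_
        filter_upwards [hpq] with x hx
        rw [abs_mul]
        exact (ENNReal.ofReal_le_ofReal
          (Real.mul_le_rpow_add_rpow (abs_nonneg _) (abs_nonneg _) hx)).trans
          ENNReal.ofReal_add_le
    _ = vModular μ p f + vModular μ q g :=
        lintegral_add_left (hf.abs.pow hp).ennreal_ofReal _

lemma lintegral_abs_mul_le_two_mul_of_vModular_div_le_one (hp : Measurable p)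
    (hpq : ∀ᵐ x ∂μ, (p x).HolderConjugate (q x)) {f g : Ω → ℝ} (hf : Measurable f)
    {a b : ℝ} (ha : 0 < a) (hb : 0 < b)
    (hfa : vModular μ p (fun x => f x / a) ≤ 1) (hgb : vModular μ q (fun x => g x / b) ≤ 1) :
    ∫⁻ x, ENNReal.ofReal |f x * g x| ∂μ ≤ 2 * ENNReal.ofReal a * ENNReal.ofReal b := by
  have hscale : ∀ x, |f x * g x| = (a * b) * |f x / a * (g x / b)| := fun x => by
    rw [abs_mul, abs_mul, abs_div, abs_div, abs_of_pos ha, abs_of_pos hb]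
    field_simp
  calc ∫⁻ x, ENNReal.ofReal |f x * g x| ∂μ
      = ENNReal.ofReal (a * b) * ∫⁻ x, ENNReal.ofReal |f x / a * (g x / b)| ∂μ := by
        simp_rw [hscale, ENNReal.ofReal_mul (mul_pos ha hb).le]
        exact lintegral_const_mul' _ _ ENNReal.ofReal_ne_top
    _ ≤ ENNReal.ofReal (a * b) * (1 + 1) := by
        gcongr
        exact (lintegral_abs_mul_le_vModular_add_vModular hp hpq (hf.div_const a)).trans
          (add_le_add hfa hgb)
    _ = 2 * ENNReal.ofReal a * ENNReal.ofReal b := by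
        rw [ENNReal.ofReal_mul ha.le, one_add_one_eq_two]
        ring

lemma lintegral_abs_mul_le_two_mul_luxNorm_mul_luxNorm (hp : Measurable p)
    (hpq : ∀ᵐ x ∂μ, (p x).HolderConjugate (q x)) {f g : Ω → ℝ} (hf : Measurable f)
    (hf_lux : luxNorm μ p f ≠ ∞) (hg_lux : luxNorm μ q g ≠ ∞) :
    ∫⁻ x, ENNReal.ofReal |f x * g x| ∂μ ≤ 2 * luxNorm μ p f * luxNorm μ q g := by
  obtain ⟨a₀, ha₀, -⟩ := not_forall₂.1 (mt sInf_eq_top.2 hf_lux)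
  obtain ⟨b₀, hb₀, -⟩ := not_forall₂.1 (mt sInf_eq_top.2 hg_lux)
  rw [luxNorm, luxNorm, sInf_eq_iInf', sInf_eq_iInf', ENNReal.mul_iInf_of_ne two_ne_zero ofNat_ne_top]
  refine ENNReal.le_iInf_mul_iInf ⟨⟨a₀, ha₀⟩, mul_ne_top ofNat_ne_top ha₀.1⟩
    ⟨⟨b₀, hb₀⟩, hb₀.1⟩ fun ⟨a, ha_top, ha_pos, hfa⟩ ⟨b, hb_top, hb_pos, hgb⟩ => ?_
  have h := lintegral_abs_mul_le_two_mul_of_vModular_div_le_one hp hpq hf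
    (ENNReal.toReal_pos ha_pos.ne' ha_top) (ENNReal.toReal_pos hb_pos.ne' hb_top) hfa hgb
  rwa [ENNReal.ofReal_toReal ha_top, ENNReal.ofReal_toReal hb_top] at h

end Modular

theorem variable_holder_general {Ω : Type*} [MeasurableSpace Ω] (μ : Measure Ω)
    (p : Ω → ℝ) (hp : Measurable p)
    (hpm : 1 < essInf p μ)
    (p' : Ω → ℝ)
    (hconj : ∀ x, 1 / p x + 1 / p' x = 1) :
    ∃ c : ℝ≥0∞, 1 < c ∧ ∀ f g : Ω → ℝ, Measurable f → Measurable g →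
      luxNorm μ p f ≠ ∞ → luxNorm μ p' g ≠ ∞ →
      Integrable (fun x => f x * g x) μ ∧
      ∫⁻ x, ENNReal.ofReal |f x * g x| ∂μ ≤ c * luxNorm μ p f * luxNorm μ p' g := by
  have hpq : ∀ᵐ x ∂μ, (p x).HolderConjugate (p' x) := by
    filter_upwards [ae_lt_of_nonneg_of_lt_essInf zero_le_one hpm] with x hx
    exact Real.holderConjugate_iff.2 ⟨hx, by simpa only [one_div] using hconj x⟩
  refine ⟨2, one_lt_two, fun f g hf hg hf_lux hg_lux => ?_⟩
  have hbound := lintegral_abs_mul_le_two_mul_luxNorm_mul_luxNorm hp hpq hf hf_lux hg_lux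
  refine ⟨⟨(hf.mul hg).aestronglyMeasurable, ?_⟩, hbound⟩
  rw [hasFiniteIntegral_iff_norm]
  exact hbound.trans_lt (mul_lt_top (mul_lt_top ofNat_lt_top hf_lux.lt_top) hg_lux.lt_top)

/-- Hölder's inequality in variable Lebesgue spaces: there is `c > 1`
such that for all `f ∈ L^{p(·)}` and `g ∈ L^{p'(·)}`, `fg ∈ L¹` and
`∫ |fg| ≤ c ‖f‖_{p(·)} ‖g‖_{p'(·)}`. -/
theorem variable_holder {Ω : Type*} [MeasurableSpace Ω] (μ : Measure Ω)
    (p : Ω → ℝ) (hp : Measurable p)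
    (hbdd : IsBoundedUnder (· ≤ ·) (ae μ) p)
    (hpm : 1 < essInf p μ)
    (p' : Ω → ℝ) (hp' : Measurable p')
    (hconj : ∀ x, 1 / p x + 1 / p' x = 1) :
    ∃ c : ℝ≥0∞, 1 < c ∧ ∀ f g : Ω → ℝ, Measurable f → Measurable g →
      luxNorm μ p f ≠ ∞ → luxNorm μ p' g ≠ ∞ →
      Integrable (fun x => f x * g x) μ ∧
      ∫⁻ x, ENNReal.ofReal |f x * g x| ∂μ ≤ c * luxNorm μ p f * luxNorm μ p' g :=
  variable_holder_general μ p hp hpm p' hconj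
end
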